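/- arXiv:1004.1125 — 14 statements merged into one kernel-verified Lean document; each statement's English description precedes it below -/
import Mathlib

section
/- For any traceless endomorphisms f, g, h of a two-dimensional vector space V over a field of characteristic not 2 or 3, the identity [[f,g],h] = 2(trace(gh)·f − trace(fh)·g) holds, where [x,y] = xy − yx. -/
open LinearMap FiniteDimensional

lemma sl2_matrix_lemma (F : Type*) [Field F]
    (A B C : Matrix (Fin 2) (Fin 2) F)
    (hA : A.trace = 0) (hB : B.trace = 0) (hC : C.trace = 0) :
    (A * B - B * A) * C - C * (A * B - B * A)
      = (2 : F) • ((B * C).trace • A - (A * C).trace • B) := by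
  have hA' : A 1 1 = - A 0 0 := by
    have := hA; simp [Matrix.trace, Fin.sum_univ_two] at this; linear_combination this
  have hB' : B 1 1 = - B 0 0 := by
    have := hB; simp [Matrix.trace, Fin.sum_univ_two] at this; linear_combination this
  have hC' : C 1 1 = - C 0 0 := by
    have := hC; simp [Matrix.trace, Fin.sum_univ_two] at this; linear_combination this
  ext i j
  fin_cases i <;> fin_cases j <;>
    simp [Matrix.mul_apply, Matrix.trace, Fin.sum_univ_two, hA', hB', hC',
      Matrix.smul_apply] <;> ring

theorem sl2_double_bracket
    (F : Type*) [Field F] (h2 : (2 : F) ≠ 0) (h3 : (3 : F) ≠ 0)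
    (V : Type*) [AddCommGroup V] [Module F V] [FiniteDimensional F V]
    (hdim : Module.finrank F V = 2)
    (f g h : V →ₗ[F] V)
    (hf : LinearMap.trace F V f = 0)
    (hg : LinearMap.trace F V g = 0)
    (hh : LinearMap.trace F V h = 0) :
    (f ∘ₗ g - g ∘ₗ f) ∘ₗ h - h ∘ₗ (f ∘ₗ g - g ∘ₗ f)
      = (2 : F) • ((LinearMap.trace F V (g ∘ₗ h)) • f
          - (LinearMap.trace F V (f ∘ₗ h)) • g) := by
  let b := Module.finBasisOfFinrankEq F V hdim
  have key := sl2_matrix_lemma F (LinearMap.toMatrix b b f) (LinearMap.toMatrix b b g)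
    (LinearMap.toMatrix b b h)
    (by rw [← LinearMap.trace_eq_matrix_trace F b]; exact hf)
    (by rw [← LinearMap.trace_eq_matrix_trace F b]; exact hg)
    (by rw [← LinearMap.trace_eq_matrix_trace F b]; exact hh)
  apply (LinearMap.toMatrix b b).injective
  simp only [map_sub, map_smul, LinearMap.toMatrix_comp b b b]
  rw [key]
  congr 2 <;> rw [LinearMap.trace_eq_matrix_trace F b, LinearMap.toMatrix_comp b b b]
end

section
/- Let (.|.) be a nonzero skew-symmetric bilinear form on a two-dimensional vector space V and f a traceless endomorphism of V. Then for all u, v, w in V: (u|v)·f(w) = −(f(u)|w)·v + (f(v)|w)·u. -/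
/-!
In dimension two every alternating form is a multiple of the determinant with respect to a
basis, so two determinant identities suffice: Cramer's rule
`det(u, v) x = det(x, v) u - det(x, u) v`, and `det(f u, v) + det(u, f v) = tr f · det(u, v)`.
The latter makes a traceless `f` satisfy `B (f x) y = B (f y) x`; applying Cramer's rule to
`x = f w` then gives the identity.
-/

open Module

namespace Module.Basis

variable {F V : Type*} [Field F] [AddCommGroup V] [Module F V] (b : Basis (Fin 2) F V)

lemma det_fin_two_apply (u v : V) :
    b.det ![u, v] = b.repr u 0 * b.repr v 1 - b.repr v 0 * b.repr u 1 := by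
  simp [Basis.det_apply, Matrix.det_fin_two, Basis.toMatrix_apply]

lemma det_fin_two_smul_eq (u v x : V) :
    b.det ![u, v] • x = b.det ![x, v] • u - b.det ![x, u] • v := by
  refine b.ext_elem fun i => ?_
  fin_cases i <;> simp [det_fin_two_apply] <;> ring

lemma det_fin_two_map_add_map (f : V →ₗ[F] V) (u v : V) :
    b.det ![f u, v] + b.det ![u, f v] = LinearMap.trace F V f * b.det ![u, v] := by
  simp only [det_fin_two_apply, LinearMap.trace_eq_matrix_trace F b f, Matrix.trace_fin_two,
    ← LinearMap.toMatrix_mulVec_repr b b f, Matrix.mulVec, dotProduct, Fin.sum_univ_two]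
  ring

end Module.Basis

namespace LinearMap.IsAlt

variable {F V : Type*} [Field F] [AddCommGroup V] [Module F V] {B : V →ₗ[F] V →ₗ[F] F}

lemma eq_det_mul (hB : B.IsAlt) (b : Basis (Fin 2) F V) (u v : V) :
    B u v = B (b 0) (b 1) * b.det ![u, v] := by
  have hu := b.sum_repr u
  have hv := b.sum_repr v
  rw [Fin.sum_univ_two] at hu hv
  conv_lhs => rw [← hu, ← hv]
  rw [b.det_fin_two_apply]
  simp only [map_add, map_smul, LinearMap.add_apply, LinearMap.smul_apply, smul_eq_mul,
    hB.self_eq_zero, ← hB.neg (b 0) (b 1)]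
  ring

variable (hB : B.IsAlt) (hdim : finrank F V = 2)
include hB hdim

lemma smul_eq_sub_of_finrank_eq_two (u v x : V) : B u v • x = B x v • u - B x u • v := by
  have := finite_of_finrank_eq_succ hdim
  let b := finBasisOfFinrankEq F V hdim
  rw [hB.eq_det_mul b u v, hB.eq_det_mul b x v, hB.eq_det_mul b x u, mul_smul, mul_smul,
    mul_smul, ← smul_sub, b.det_fin_two_smul_eq u v x]

lemma map_add_map_eq_trace_mul_of_finrank_eq_two (f : V →ₗ[F] V) (u v : V) :
    B (f u) v + B u (f v) = LinearMap.trace F V f * B u v := by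
  have := finite_of_finrank_eq_succ hdim
  let b := finBasisOfFinrankEq F V hdim
  rw [hB.eq_det_mul b (f u) v, hB.eq_det_mul b u (f v), hB.eq_det_mul b u v, ← mul_add,
    b.det_fin_two_map_add_map, mul_left_comm]

end LinearMap.IsAlt

theorem alternating_form_sl2_identity_general
    (F : Type*) [Field F]
    (V : Type*) [AddCommGroup V] [Module F V]
    (hdim : Module.finrank F V = 2)
    (B : V →ₗ[F] V →ₗ[F] F)
    (halt : ∀ v : V, B v v = 0)
    (f : V →ₗ[F] V)
    (hf : LinearMap.trace F V f = 0)
    (u v w : V) :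
    B u v • f w = -(B (f u) w) • v + (B (f v) w) • u := by
  have hB : B.IsAlt := halt
  have hf_symm : ∀ x y, B (f x) y = B (f y) x := fun x y => by
    have := hB.map_add_map_eq_trace_mul_of_finrank_eq_two hdim f x y
    rwa [hf, zero_mul, ← hB.neg (f y) x, add_neg_eq_zero] at this
  rw [hB.smul_eq_sub_of_finrank_eq_two hdim u v (f w), hf_symm w v, hf_symm w u, neg_smul,
    neg_add_eq_sub]

theorem alternating_form_sl2_identity
    (F : Type*) [Field F] (h2 : (2 : F) ≠ 0)
    (V : Type*) [AddCommGroup V] [Module F V] [FiniteDimensional F V]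
    (hdim : Module.finrank F V = 2)
    (B : V →ₗ[F] V →ₗ[F] F)
    (halt : ∀ v : V, B v v = 0)
    (hne : B ≠ 0)
    (f : V →ₗ[F] V)
    (hf : LinearMap.trace F V f = 0)
    (u v w : V) :
    B u v • f w = -(B (f u) w) • v + (B (f v) w) • u :=
  alternating_form_sl2_identity_general F V hdim B halt f hf u v w
end

section
/- Let (.|.) be a nonzero skew-symmetric bilinear form on a two-dimensional vector space V, and for u,v ∈ V define γ_{u,v} = (u|·)v + (v|·)u. Then for any traceless endomorphism f of V and any u,v ∈ V, [f, γ_{u,v}] = γ_{f(u),v} + γ_{u,f(v)}. -/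
/-- `γ_{u,v} : w ↦ (u|w)v + (v|w)u`. -/
noncomputable def gammaMap {F : Type*} [Field F] {V : Type*} [AddCommGroup V] [Module F V]
    (B : V →ₗ[F] V →ₗ[F] F) (u v : V) : V →ₗ[F] V :=
  (B u).smulRight v + (B v).smulRight u

/-!
On a plane, every alternating form `B` satisfies `B (f p) q + B p (f q) = tr f · B p q`: the
left side minus the right side is again alternating, hence determined by its value on one pair
of basis vectors, where it vanishes by a direct computation. So a traceless `f` is skew-adjoint
for `B`, and skew-adjointness is exactly what makes `[f, γ_{u,v}] - γ_{f u, v} - γ_{u, f v}`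
vanish.
-/

namespace LinearMap.IsAlt

variable {R M : Type*} [CommRing R] [AddCommGroup M] [Module R M] {B : M →ₗ[R] M →ₗ[R] R}

theorem eq_zero_of_apply_basis_fin_two (hB : B.IsAlt) (b : Module.Basis (Fin 2) R M)
    (h01 : B (b 0) (b 1) = 0) : B = 0 := by
  refine LinearMap.ext_basis b b fun i j => ?_
  fin_cases i <;> fin_cases j
  all_goals simp [hB.self_eq_zero, ← hB.neg (b 0) (b 1), h01]

theorem comp_add_compl₂_sub_trace_smul (hB : B.IsAlt) (f : M →ₗ[R] M) :
    (B ∘ₗ f + B.compl₂ f - LinearMap.trace R M f • B).IsAlt := by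
  intro x
  simp [hB.self_eq_zero, ← hB.neg x (f x)]

theorem comp_add_compl₂_apply_basis_fin_two (hB : B.IsAlt) (b : Module.Basis (Fin 2) R M)
    (f : M →ₗ[R] M) :
    B (f (b 0)) (b 1) + B (b 0) (f (b 1)) = LinearMap.trace R M f * B (b 0) (b 1) := by
  have expand (x : M) : x = b.repr x 0 • b 0 + b.repr x 1 • b 1 :=
    (b.sum_repr x).symm.trans (Fin.sum_univ_two _)
  rw [expand (f (b 0)), expand (f (b 1)), LinearMap.trace_eq_matrix_trace R b,
    Matrix.trace_fin_two]
  simp only [map_add, map_smul, LinearMap.add_apply, LinearMap.smul_apply, smul_eq_mul,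
    hB.self_eq_zero, mul_zero, add_zero, zero_add, LinearMap.toMatrix_apply]
  ring

theorem comp_add_compl₂_eq_trace_smul (hB : B.IsAlt) (b : Module.Basis (Fin 2) R M)
    (f : M →ₗ[R] M) : B ∘ₗ f + B.compl₂ f = LinearMap.trace R M f • B := by
  rw [← sub_eq_zero]
  refine (hB.comp_add_compl₂_sub_trace_smul f).eq_zero_of_apply_basis_fin_two b ?_
  simpa [sub_eq_zero] using hB.comp_add_compl₂_apply_basis_fin_two b f

end LinearMap.IsAlt

theorem gammaMap_commutator_of_skew {F : Type*} [Field F] {V : Type*} [AddCommGroup V]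
    [Module F V] {B : V →ₗ[F] V →ₗ[F] F} {f : V →ₗ[F] V}
    (hskew : ∀ p q, B (f p) q + B p (f q) = 0) (u v : V) :
    f ∘ₗ gammaMap B u v - gammaMap B u v ∘ₗ f
      = gammaMap B (f u) v + gammaMap B u (f v) := by
  ext w
  simp only [gammaMap, LinearMap.sub_apply, LinearMap.add_apply, LinearMap.comp_apply,
    LinearMap.smulRight_apply, map_add, map_smul]
  rw [eq_neg_of_add_eq_zero_left (hskew u w), eq_neg_of_add_eq_zero_left (hskew v w)]
  module

theorem bracket_with_gamma_general
    (F : Type*) [Field F]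
    (V : Type*) [AddCommGroup V] [Module F V]
    (hdim : Module.finrank F V = 2)
    (B : V →ₗ[F] V →ₗ[F] F)
    (halt : ∀ v : V, B v v = 0)
    (f : V →ₗ[F] V)
    (hf : LinearMap.trace F V f = 0)
    (u v : V) :
    f ∘ₗ gammaMap B u v - gammaMap B u v ∘ₗ f
      = gammaMap B (f u) v + gammaMap B u (f v) := by
  have : Module.Finite F V := Module.finite_of_finrank_eq_succ hdim
  have hskew := LinearMap.IsAlt.comp_add_compl₂_eq_trace_smul halt
    (Module.finBasisOfFinrankEq F V hdim) f
  rw [hf, zero_smul] at hskew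
  exact gammaMap_commutator_of_skew (fun p q => by simpa using LinearMap.congr_fun₂ hskew p q) u v

theorem bracket_with_gamma
    (F : Type*) [Field F] (h2 : (2 : F) ≠ 0)
    (V : Type*) [AddCommGroup V] [Module F V] [FiniteDimensional F V]
    (hdim : Module.finrank F V = 2)
    (B : V →ₗ[F] V →ₗ[F] F)
    (halt : ∀ v : V, B v v = 0)
    (hne : B ≠ 0)
    (f : V →ₗ[F] V)
    (hf : LinearMap.trace F V f = 0)
    (u v : V) :
    f ∘ₗ gammaMap B u v - gammaMap B u v ∘ₗ f
      = gammaMap B (f u) v + gammaMap B u (f v) :=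
  bracket_with_gamma_general F V hdim B halt f hf u v
end

section
/- Let (.|.) be a nonzero skew-symmetric bilinear form on a two-dimensional vector space V and define γ_{u,v}(w) = (u|w)v + (v|w)u. Then for any traceless endomorphism f of V and any u, v ∈ V, trace(f ∘ γ_{u,v}) = 2(u | f(v)). -/
open Module

namespace LinearMap.IsAlt

variable {R M : Type*} [CommRing R] [AddCommGroup M] [Module R M] {B : M →ₗ[R] M →ₗ[R] R}

theorem apply_eq_of_basis_fin_two (hB : B.IsAlt) (b : Basis (Fin 2) R M) (x y : M) :
    B x y = (b.repr x 0 * b.repr y 1 - b.repr x 1 * b.repr y 0) * B (b 0) (b 1) := by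
  conv_lhs => rw [← b.sum_repr x, ← b.sum_repr y]
  simp only [Fin.sum_univ_two, map_add, map_smul, add_apply, smul_apply, smul_eq_mul,
    hB.self_eq_zero, ← hB.neg (b 0) (b 1)]
  ring

theorem smul_eq_add_of_basis_fin_two (hB : B.IsAlt) (b : Basis (Fin 2) R M) (x y z : M) :
    B x y • z = B z y • x + B x z • y := by
  refine b.repr.injective (Finsupp.ext fun i => ?_)
  simp only [map_add, map_smul, Finsupp.add_apply, Finsupp.smul_apply, smul_eq_mul]
  rw [hB.apply_eq_of_basis_fin_two b x y, hB.apply_eq_of_basis_fin_two b z y,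
    hB.apply_eq_of_basis_fin_two b x z]
  fin_cases i <;> simp only [Fin.zero_eta, Fin.mk_one] <;> ring

theorem trace_mul_apply_of_finrank_eq_two [StrongRankCondition R] [Free R M] [Module.Finite R M]
    (hdim : finrank R M = 2) (hB : B.IsAlt) (f : M →ₗ[R] M) (x y : M) :
    trace R M f * B x y = B (f x) y + B x (f y) := by
  have hsplit : B x y • f = (B.flip y).smulRight (f x) + (B x).smulRight (f y) := by
    ext z
    simpa only [smul_apply, add_apply, smulRight_apply, flip_apply, map_smul, map_add] using
      congrArg f (hB.smul_eq_add_of_basis_fin_two (finBasisOfFinrankEq R M hdim) x y z)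
  rw [mul_comm, ← smul_eq_mul, ← map_smul, hsplit, map_add, trace_smulRight, trace_smulRight,
    flip_apply]

end LinearMap.IsAlt

theorem LinearMap.trace_comp_gammaMap {F V : Type*} [Field F] [AddCommGroup V] [Module F V]
    [FiniteDimensional F V] (B : V →ₗ[F] V →ₗ[F] F) (f : V →ₗ[F] V) (u v : V) :
    trace F V (f ∘ₗ gammaMap B u v) = B u (f v) + B v (f u) := by
  have hcomp : f ∘ₗ gammaMap B u v = (B u).smulRight (f v) + (B v).smulRight (f u) := by
    ext w
    simp [gammaMap]
  rw [hcomp, map_add, trace_smulRight, trace_smulRight]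

theorem trace_f_gamma_general
    (F : Type*) [Field F]
    (V : Type*) [AddCommGroup V] [Module F V] [FiniteDimensional F V]
    (hdim : Module.finrank F V = 2)
    (B : V →ₗ[F] V →ₗ[F] F)
    (halt : ∀ v : V, B v v = 0)
    (f : V →ₗ[F] V)
    (hf : LinearMap.trace F V f = 0)
    (u v : V) :
    LinearMap.trace F V (f ∘ₗ gammaMap B u v) = 2 * B u (f v) := by
  have hB : B.IsAlt := halt
  have hskew : B (f u) v + B u (f v) = 0 := by
    rw [← hB.trace_mul_apply_of_finrank_eq_two hdim, hf, zero_mul]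
  rw [LinearMap.trace_comp_gammaMap, ← hB.neg (f u) v]
  linear_combination -hskew

theorem trace_f_gamma
    (F : Type*) [Field F] (h2 : (2 : F) ≠ 0)
    (V : Type*) [AddCommGroup V] [Module F V] [FiniteDimensional F V]
    (hdim : Module.finrank F V = 2)
    (B : V →ₗ[F] V →ₗ[F] F)
    (halt : ∀ v : V, B v v = 0)
    (hne : B ≠ 0)
    (f : V →ₗ[F] V)
    (hf : LinearMap.trace F V f = 0)
    (u v : V) :
    LinearMap.trace F V (f ∘ₗ gammaMap B u v) = 2 * B u (f v) :=
  trace_f_gamma_general F V hdim B halt f hf u v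
end

section
/- Let U be a triple system satisfying [L(u,v), L(x,y)] = L(L(u,v)x, y) + ε·L(x, L(v,u)y), with S(x,y) = L(x,y) + εL(y,x) and T(x,y) = L(y,x) − εL(x,y). Then [T(u,v), T(x,y)] = −ε·S(T(u,v)x, y) + ε·S(x, T(u,v)y) for all u,v,x,y ∈ U. -/
theorem bracket_T_T
    (F : Type*) [Field F] (h2 : (2 : F) ≠ 0) (h3 : (3 : F) ≠ 0)
    (U : Type*) [AddCommGroup U] [Module F U]
    (t : U →ₗ[F] U →ₗ[F] U →ₗ[F] U)
    (ε : F) (hε : ε = 1 ∨ ε = -1)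
    -- (FK1): [L(u,v), L(x,y)] = L(L(u,v)x, y) + ε L(x, L(v,u)y)
    (hFK1 : ∀ u v x y : U,
      t u v ∘ₗ t x y - t x y ∘ₗ t u v = t (t u v x) y + ε • t x (t v u y))
    -- S(x,y) = L(x,y) + ε L(y,x),  T(x,y) = L(y,x) - ε L(x,y)
    (S T' : U → U → (U →ₗ[F] U))
    (hS : ∀ x y, S x y = t x y + ε • t y x)
    (hT : ∀ x y, T' x y = t y x - ε • t x y)
    (u v x y : U) :
    T' u v ∘ₗ T' x y - T' x y ∘ₗ T' u v
      = -ε • S (T' u v x) y + ε • S x (T' u v y) := by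
  have K : ∀ a b c d z : U, t a b (t c d z) - t c d (t a b z)
      = t (t a b c) d z + ε • t c (t b a d) z := by
    intro a b c d z
    have := congrArg (fun f => f z) (hFK1 a b c d)
    simpa using this
  ext z
  simp only [hS, hT, LinearMap.sub_apply, LinearMap.comp_apply, LinearMap.add_apply,
    LinearMap.smul_apply, map_sub, map_smul, map_add, LinearMap.neg_apply, neg_smul]
  rcases hε with rfl | rfl
  · linear_combination (norm := module) K v u y x z - K v u x y z - K u v y x z + K u v x y z
  · linear_combination (norm := module) K v u y x z + K v u x y z + K u v y x z + K u v x y z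
end

section
/- Let U be a nonzero (ε,δ) Freudenthal-Kantor triple system which is unitary, i.e., the identity operator lies in the linear span of the operators K(x,y). Then ε = δ and U is special, i.e., K(x,y) = εδ·L(y,x) − ε·L(x,y) for all x,y ∈ U. -/
/-- `K(x,y) : z ↦ xzy - δ yzx`. -/
noncomputable def Kmap {F : Type*} [Field F] {U : Type*} [AddCommGroup U] [Module F U]
    (t : U →ₗ[F] U →ₗ[F] U →ₗ[F] U) (δ : F) (x y : U) : U →ₗ[F] U :=
  (t x).flip y - δ • (t y).flip x

theorem unitary_implies_special
    (F : Type*) [Field F] (h2 : (2 : F) ≠ 0) (h3 : (3 : F) ≠ 0)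
    (U : Type*) [AddCommGroup U] [Module F U]
    (t : U →ₗ[F] U →ₗ[F] U →ₗ[F] U)
    (ε δ : F) (hε : ε = 1 ∨ ε = -1) (hδ : δ = 1 ∨ δ = -1)
    (hFK1 : ∀ u v x y : U,
      t u v ∘ₗ t x y - t x y ∘ₗ t u v = t (t u v x) y + ε • t x (t v u y))
    (hFK2 : ∀ u v x y : U,
      Kmap t δ (Kmap t δ u v x) y
        = t y x ∘ₗ Kmap t δ u v - ε • (Kmap t δ u v ∘ₗ t x y))
    (hU : ∃ u : U, u ≠ 0)
    (hunitary : (LinearMap.id : U →ₗ[F] U) ∈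
      Submodule.span F {M : U →ₗ[F] U | ∃ x y : U, M = Kmap t δ x y}) :
    ε = δ ∧ ∀ x y : U, Kmap t δ x y = (ε * δ) • t y x - ε • t x y := by
  have hε2 : ε * ε = 1 := by rcases hε with h | h <;> simp [h]
  have hδ2 : δ * δ = 1 := by rcases hδ with h | h <;> simp [h]
  -- linearity of Kmap in its first argument
  have Kzero : ∀ c : U, Kmap t δ (0 : U) c = 0 := by
    intro c; ext z; simp [Kmap]
  have Kadd : ∀ a b c : U, Kmap t δ (a + b) c = Kmap t δ a c + Kmap t δ b c := by
    intro a b c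
    ext z
    simp only [Kmap, map_add, LinearMap.add_apply, LinearMap.sub_apply, LinearMap.smul_apply,
      LinearMap.flip_apply, smul_add]
    abel
  have Ksmul : ∀ (r : F) (a c : U), Kmap t δ (r • a) c = r • Kmap t δ a c := by
    intro r a c
    ext z
    simp only [Kmap, map_smul, LinearMap.smul_apply, LinearMap.sub_apply, LinearMap.flip_apply]
    match_scalars <;> ring
  -- key: for M in the span, K(Mx, y) = L(y,x) M - ε M L(x,y)
  have main : ∀ M ∈ Submodule.span F {M : U →ₗ[F] U | ∃ x y : U, M = Kmap t δ x y},
      ∀ x y : U, Kmap t δ (M x) y = t y x ∘ₗ M - ε • (M ∘ₗ t x y) := by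
    intro M hM
    induction hM using Submodule.span_induction with
    | mem M hMem =>
        obtain ⟨u, v, rfl⟩ := hMem
        intro x y
        exact hFK2 u v x y
    | zero =>
        intro x y
        simp [Kzero]
    | add a b _ _ ha hb =>
        intro x y
        rw [LinearMap.add_apply, Kadd, ha x y, hb x y, LinearMap.comp_add,
          LinearMap.add_comp, smul_add]
        abel
    | smul r a _ ha =>
        intro x y
        rw [LinearMap.smul_apply, Ksmul, ha x y, LinearMap.comp_smul, LinearMap.smul_comp]
        rw [smul_sub, smul_smul, smul_smul, mul_comm r ε]
  -- taking M = id :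
  have key : ∀ x y : U, Kmap t δ x y = t y x - ε • t x y := by
    intro x y
    have h := main LinearMap.id hunitary x y
    simpa using h
  -- skewness from the definition
  have Kswap1 : ∀ x y : U, Kmap t δ y x = (-δ) • Kmap t δ x y := by
    intro x y
    ext z
    simp only [Kmap, LinearMap.sub_apply, LinearMap.smul_apply, LinearMap.flip_apply]
    match_scalars <;>
      first | ring1 | linear_combination hδ2 | linear_combination -hδ2
  -- skewness from the key formula
  have Kswap2 : ∀ x y : U, Kmap t δ y x = (-ε) • Kmap t δ x y := by
    intro x y
    rw [key x y, key y x]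
    ext z
    simp only [LinearMap.sub_apply, LinearMap.smul_apply]
    match_scalars <;>
      first | ring1 | linear_combination hε2 | linear_combination -hε2
  -- hence (δ - ε) • K(x,y) = 0
  have hdiff : ∀ x y : U, (δ - ε) • Kmap t δ x y = 0 := by
    intro x y
    have h := (Kswap1 x y).symm.trans (Kswap2 x y)
    have : (-δ) • Kmap t δ x y - (-ε) • Kmap t δ x y = 0 := by rw [h]; abel
    rw [← sub_smul] at this
    have heq : -δ - -ε = -(δ - ε) := by ring
    rw [heq, neg_smul, neg_eq_zero] at this
    exact this
  -- if ε ≠ δ, then all K vanish, contradicting unitarity and U ≠ 0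
  have habs : δ - ε ≠ 0 → False := by
    intro hne
    obtain ⟨u, hu⟩ := hU
    have hK0 : ∀ x y : U, Kmap t δ x y = 0 := by
      intro x y
      have h := congrArg (fun z => (δ - ε)⁻¹ • z) (hdiff x y)
      simpa [smul_smul, inv_mul_cancel₀ hne] using h
    have hle : Submodule.span F {M : U →ₗ[F] U | ∃ x y : U, M = Kmap t δ x y} ≤ ⊥ := by
      rw [Submodule.span_le]
      rintro M ⟨x, y, rfl⟩
      simpa using hK0 x y
    have hid : (LinearMap.id : U →ₗ[F] U) = 0 := by simpa using hle hunitary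
    have hu0 : u = (0 : U) := by
      have := congrArg (fun f : U →ₗ[F] U => f u) hid
      simpa using this
    exact hu hu0
  have hεδ : ε = δ := by
    by_contra hne
    exact habs (fun h => hne (by linear_combination -h))
  refine ⟨hεδ, fun x y => ?_⟩
  have : ε * δ = 1 := by rw [← hεδ]; exact hε2
  rw [this, one_smul]
  exact key x y
end

section
/- Let U be a special (ε,ε) Freudenthal-Kantor triple system. Then for all u,v,x,y ∈ U: K(u,v)K(x,y) + K(x,y)K(u,v) = K(K(u,v)x, y) + K(x, K(u,v)y). -/
theorem special_epsilon_epsilon_KK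
    (F : Type*) [Field F] (h2 : (2 : F) ≠ 0) (h3 : (3 : F) ≠ 0)
    (U : Type*) [AddCommGroup U] [Module F U]
    (t : U →ₗ[F] U →ₗ[F] U →ₗ[F] U)
    (ε : F) (hε : ε = 1 ∨ ε = -1)
    (hFK1 : ∀ u v x y : U,
      t u v ∘ₗ t x y - t x y ∘ₗ t u v = t (t u v x) y + ε • t x (t v u y))
    (hFK2 : ∀ u v x y : U,
      Kmap t ε (Kmap t ε u v x) y
        = t y x ∘ₗ Kmap t ε u v - ε • (Kmap t ε u v ∘ₗ t x y))
    (hspecial : ∀ x y : U, Kmap t ε x y = t y x - ε • t x y)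
    (u v x y : U) :
    Kmap t ε u v ∘ₗ Kmap t ε x y + Kmap t ε x y ∘ₗ Kmap t ε u v
      = Kmap t ε (Kmap t ε u v x) y + Kmap t ε x (Kmap t ε u v y) := by
  have hsq : ε * ε = 1 := by rcases hε with h | h <;> simp [h]
  have hskew : ∀ a b : U, Kmap t ε a b = (-ε) • Kmap t ε b a := by
    intro a b
    rw [hspecial, hspecial, smul_sub, smul_smul, neg_mul, hsq, neg_smul, neg_smul,
      sub_neg_eq_add, one_smul]
    abel
  rw [hskew x (Kmap t ε u v y), hFK2, hFK2 u v y x, hspecial x y]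
  simp only [LinearMap.comp_sub, LinearMap.sub_comp, LinearMap.comp_smul, LinearMap.smul_comp,
    smul_sub, smul_smul, neg_mul, hsq, neg_smul, one_smul]
  abel
end

section
/- Let U be a vector space with a trilinear product satisfying the Freudenthal-Kantor conditions (FK1) [L(u,v),L(x,y)] = L(L(u,v)x,y) + ε L(x,L(v,u)y), the speciality condition K(x,y) = L(y,x) − ε L(x,y), and the condition K(u,v)K(x,y) + K(x,y)K(u,v) = K(K(u,v)x, y) + K(x, K(u,v)y). Then (FK2) holds: K(K(u,v)x, y) = L(y,x)K(u,v) − ε K(u,v)L(x,y), so U is a special (ε,ε) Freudenthal-Kantor triple system. -/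
theorem converse_special_epsilon_epsilon
    (F : Type*) [Field F] (h2 : (2 : F) ≠ 0) (h3 : (3 : F) ≠ 0)
    (U : Type*) [AddCommGroup U] [Module F U]
    (t : U →ₗ[F] U →ₗ[F] U →ₗ[F] U)
    (ε : F) (hε : ε = 1 ∨ ε = -1)
    (hFK1 : ∀ u v x y : U,
      t u v ∘ₗ t x y - t x y ∘ₗ t u v = t (t u v x) y + ε • t x (t v u y))
    (hspecial : ∀ x y : U, Kmap t ε x y = t y x - ε • t x y)
    (hKK : ∀ u v x y : U,
      Kmap t ε u v ∘ₗ Kmap t ε x y + Kmap t ε x y ∘ₗ Kmap t ε u v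
        = Kmap t ε (Kmap t ε u v x) y + Kmap t ε x (Kmap t ε u v y)) :
    ∀ u v x y : U,
      Kmap t ε (Kmap t ε u v x) y
        = t y x ∘ₗ Kmap t ε u v - ε • (Kmap t ε u v ∘ₗ t x y) := by
  intro u v x y
  have hsq : ε * ε = 1 := by rcases hε with h | h <;> rw [h] <;> ring
  have hApt : ∀ a : U, Kmap t ε u v a = t v u a - ε • t u v a := by
    intro a; rw [hspecial u v]; simp
  have star : ∀ a b : U, t (Kmap t ε u v a) b
      = Kmap t ε u v ∘ₗ t a b - t a b ∘ₗ Kmap t ε u v + t a (Kmap t ε u v b) := by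
    intro a b
    have h1 := hFK1 v u a b
    have h2' := hFK1 u v a b
    have e2 : ε • ε • (t a) ((t v u) b) = (t a) ((t v u) b) := by
      rw [smul_smul, hsq, one_smul]
    rw [hApt a, hApt b, hspecial u v]
    simp only [map_sub, map_smul, LinearMap.sub_apply, LinearMap.smul_apply,
      LinearMap.sub_comp, LinearMap.smul_comp, LinearMap.comp_sub, LinearMap.comp_smul]
    linear_combination (norm := module) ε • h2' - h1 + e2
  have s1 := star y x
  have s2 := star x y
  have sp1 := hspecial (Kmap t ε u v x) y
  have sp2 := hspecial x (Kmap t ε u v y)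
  have kk := hKK u v x y
  rw [hspecial x y] at kk
  simp only [LinearMap.comp_sub, LinearMap.sub_comp, LinearMap.comp_smul,
    LinearMap.smul_comp] at kk
  have key : (2:F) • Kmap t ε (Kmap t ε u v x) y
      = (2:F) • (t y x ∘ₗ Kmap t ε u v - ε • (Kmap t ε u v ∘ₗ t x y)) := by
    linear_combination (norm := module) sp1 - sp2 - s1 - ε • s2 - kk
  exact smul_right_injective (U →ₗ[F] U) h2 key
end

section
/- Let U be a special (ε,−ε) Freudenthal-Kantor triple system. Then K(x,y) is a derivation of the triple product of U for every x, y ∈ U. -/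
theorem special_epsilon_minus_epsilon_K_derivation
    (F : Type*) [Field F] (h2 : (2 : F) ≠ 0) (h3 : (3 : F) ≠ 0)
    (U : Type*) [AddCommGroup U] [Module F U]
    (t : U →ₗ[F] U →ₗ[F] U →ₗ[F] U)
    (ε : F) (hε : ε = 1 ∨ ε = -1)
    (hFK1 : ∀ u v x y : U,
      t u v ∘ₗ t x y - t x y ∘ₗ t u v = t (t u v x) y + ε • t x (t v u y))
    (hFK2 : ∀ u v x y : U,
      Kmap t (-ε) (Kmap t (-ε) u v x) y
        = t y x ∘ₗ Kmap t (-ε) u v - ε • (Kmap t (-ε) u v ∘ₗ t x y))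
    (hspecial : ∀ x y : U, Kmap t (-ε) x y = -t y x - ε • t x y) :
    ∀ a b x y z : U,
      Kmap t (-ε) a b (t x y z)
        = t (Kmap t (-ε) a b x) y z + t x (Kmap t (-ε) a b y) z
          + t x y (Kmap t (-ε) a b z) := by
  intro a b x y z
  have h1 := DFunLike.congr_fun (hFK1 b a x y) z
  have h2 := DFunLike.congr_fun (hFK1 a b x y) z
  simp only [LinearMap.sub_apply, LinearMap.add_apply, LinearMap.smul_apply,
    LinearMap.comp_apply] at h1 h2
  rw [hspecial]
  simp only [LinearMap.sub_apply, LinearMap.neg_apply, LinearMap.smul_apply,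
    map_sub, map_neg, map_smul, LinearMap.add_apply]
  rcases hε with hε | hε <;> subst hε <;>
    [linear_combination (norm := module) -h1 - h2;
     linear_combination (norm := module) -h1 + h2]
end

section
/- For a special (ε,ε) Freudenthal-Kantor triple system U, the trilinear map Λ(x,y,z) = xyz + ε·xzy is totally symmetric in its three arguments when ε = 1, and totally alternating when ε = −1. -/
theorem Lambda_symmetric_or_alternating
    (F : Type*) [Field F] (h2 : (2 : F) ≠ 0) (h3 : (3 : F) ≠ 0)
    (U : Type*) [AddCommGroup U] [Module F U]
    (t : U →ₗ[F] U →ₗ[F] U →ₗ[F] U)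
    (ε : F) (hε : ε = 1 ∨ ε = -1)
    (hFK1 : ∀ u v x y : U,
      t u v ∘ₗ t x y - t x y ∘ₗ t u v = t (t u v x) y + ε • t x (t v u y))
    (hFK2 : ∀ u v x y : U,
      Kmap t ε (Kmap t ε u v x) y
        = t y x ∘ₗ Kmap t ε u v - ε • (Kmap t ε u v ∘ₗ t x y))
    (hspecial : ∀ x y : U, Kmap t ε x y = t y x - ε • t x y)
    (Λ : U → U → U → U)
    (hΛ : ∀ x y z : U, Λ x y z = t x y z + ε • t x z y) :
    (ε = 1 → ∀ x y z : U, Λ x y z = Λ y x z ∧ Λ x y z = Λ x z y)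
    ∧ (ε = -1 → ∀ x y z : U, Λ x y z = -Λ y x z ∧ Λ x y z = -Λ x z y) := by
  have key : ∀ x y z : U, t x z y - ε • t y z x = t y x z - ε • t x y z := by
    intro x y z
    have h := congrArg (fun f => f z) (hspecial x y)
    simpa [Kmap] using h
  constructor
  · intro h1 x y z
    subst h1
    have h := key x y z
    simp only [one_smul] at h
    constructor
    · rw [hΛ, hΛ]
      simp only [one_smul]
      linear_combination (norm := abel) h
    · rw [hΛ, hΛ]
      simp only [one_smul]
      abel
  · intro h1 x y z
    subst h1
    have h := key x y z
    simp only [neg_smul, one_smul, sub_neg_eq_add] at h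
    constructor
    · rw [hΛ, hΛ]
      simp only [neg_smul, one_smul]
      linear_combination (norm := abel) -h
    · rw [hΛ, hΛ]
      simp only [neg_smul, one_smul]
      abel
end

section
/- Let (U, xyz) be a special (1,1) Freudenthal-Kantor triple system. Then J = F·1 + span{K(x,y) : x,y ∈ U} is a Jordan subalgebra of End(U)⁺ (with product f∘g = ½(fg+gf)), i.e., J is closed under this symmetrized product. -/
theorem span_id_K_Jordan_subalgebra
    (F : Type*) [Field F] (h2 : (2 : F) ≠ 0) (h3 : (3 : F) ≠ 0)
    (U : Type*) [AddCommGroup U] [Module F U]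
    (t : U →ₗ[F] U →ₗ[F] U →ₗ[F] U)
    (hFK1 : ∀ u v x y : U,
      t u v ∘ₗ t x y - t x y ∘ₗ t u v = t (t u v x) y + t x (t v u y))
    (hFK2 : ∀ u v x y : U,
      Kmap t 1 (Kmap t 1 u v x) y
        = t y x ∘ₗ Kmap t 1 u v - Kmap t 1 u v ∘ₗ t x y)
    (hspecial : ∀ x y : U, Kmap t 1 x y = t y x - t x y)
    (Jspan : Submodule F (U →ₗ[F] U))
    (hJspan : Jspan = Submodule.span F
      ({LinearMap.id} ∪ {M : U →ₗ[F] U | ∃ x y : U, M = Kmap t 1 x y})) :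
    ∀ f g : U →ₗ[F] U, f ∈ Jspan → g ∈ Jspan →
      (1 / 2 : F) • (f ∘ₗ g + g ∘ₗ f) ∈ Jspan := by
  subst hJspan
  set S : Set (U →ₗ[F] U) :=
    ({LinearMap.id} ∪ {M : U →ₗ[F] U | ∃ x y : U, M = Kmap t 1 x y}) with hS
  -- key identity: anticommutator of two K's is a difference of K's
  have key : ∀ u v x y : U,
      Kmap t 1 u v ∘ₗ Kmap t 1 x y + Kmap t 1 x y ∘ₗ Kmap t 1 u v
        = Kmap t 1 (Kmap t 1 u v x) y - Kmap t 1 (Kmap t 1 u v y) x := by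
    intro u v x y
    rw [hFK2 u v x y, hFK2 u v y x, hspecial x y]
    simp only [LinearMap.sub_comp, LinearMap.comp_sub]
    abel
  have hmemId : (LinearMap.id : U →ₗ[F] U) ∈ Submodule.span F S :=
    Submodule.subset_span (Or.inl rfl)
  have hmemK : ∀ x y : U, Kmap t 1 x y ∈ Submodule.span F S := fun x y =>
    Submodule.subset_span (Or.inr ⟨x, y, rfl⟩)
  have hgen : ∀ f ∈ S, ∀ g ∈ S,
      f ∘ₗ g + g ∘ₗ f ∈ Submodule.span F S := by
    rintro f (hf | ⟨u, v, rfl⟩) g (hg | ⟨x, y, rfl⟩)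
    · rw [Set.mem_singleton_iff] at hf hg; subst hf; subst hg
      simpa using add_mem hmemId hmemId
    · rw [Set.mem_singleton_iff] at hf; subst hf
      simpa using add_mem (hmemK x y) (hmemK x y)
    · rw [Set.mem_singleton_iff] at hg; subst hg
      simpa using add_mem (hmemK u v) (hmemK u v)
    · rw [key u v x y]
      exact sub_mem (hmemK _ _) (hmemK _ _)
  have hclosed : ∀ f ∈ Submodule.span F S, ∀ g ∈ Submodule.span F S,
      f ∘ₗ g + g ∘ₗ f ∈ Submodule.span F S := by
    intro f hf
    induction hf using Submodule.span_induction with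
    | mem f hfS =>
      intro g hg
      induction hg using Submodule.span_induction with
      | mem g hgS => exact hgen f hfS g hgS
      | zero => simpa using Submodule.zero_mem _
      | add g₁ g₂ _ _ ih1 ih2 =>
        have : f ∘ₗ (g₁ + g₂) + (g₁ + g₂) ∘ₗ f
            = (f ∘ₗ g₁ + g₁ ∘ₗ f) + (f ∘ₗ g₂ + g₂ ∘ₗ f) := by
          simp only [LinearMap.comp_add, LinearMap.add_comp]; abel
        rw [this]; exact add_mem ih1 ih2
      | smul c g _ ih =>
        have : f ∘ₗ (c • g) + (c • g) ∘ₗ f = c • (f ∘ₗ g + g ∘ₗ f) := by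
          simp only [LinearMap.comp_smul, LinearMap.smul_comp, smul_add]
        rw [this]; exact Submodule.smul_mem _ _ ih
    | zero => intro g hg; simpa using Submodule.zero_mem _
    | add f₁ f₂ _ _ ih1 ih2 =>
      intro g hg
      have : (f₁ + f₂) ∘ₗ g + g ∘ₗ (f₁ + f₂)
          = (f₁ ∘ₗ g + g ∘ₗ f₁) + (f₂ ∘ₗ g + g ∘ₗ f₂) := by
        simp only [LinearMap.comp_add, LinearMap.add_comp]; abel
      rw [this]; exact add_mem (ih1 g hg) (ih2 g hg)
    | smul c f _ ih =>
      intro g hg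
      have : (c • f) ∘ₗ g + g ∘ₗ (c • f) = c • (f ∘ₗ g + g ∘ₗ f) := by
        simp only [LinearMap.comp_smul, LinearMap.smul_comp, smul_add]
      rw [this]; exact Submodule.smul_mem _ _ (ih g hg)
  intro f g hf hg
  exact Submodule.smul_mem _ _ (hclosed f hf g hg)
end

section
/- Let A be a dicyclic ternary algebra containing an element e ∈ A₀ with {e,e,a} = −2a for all a ∈ A₀, {e,e,x} = x and {x,e,e} = 0 for all x ∈ A₁. Then {e,x,e} = 0 for all x ∈ A₁, and more generally {A₀,A₁,A} = 0 = {A₁,A₀,A}. -/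
theorem dicyclic_A0A1_triple_vanishes
    (F : Type*) [Field F] (h2 : (2 : F) ≠ 0) (h3 : (3 : F) ≠ 0)
    (A : Type*) [AddCommGroup A] [Module F A]
    (bar : A →ₗ[F] A)
    (star : A →ₗ[F] A →ₗ[F] A)
    (tp : A →ₗ[F] A →ₗ[F] A →ₗ[F] A)
    (hinv : ∀ x : A, bar (bar x) = x)
    (hanti : ∀ x y : A, star x y = -star y x)
    (hbarstar : ∀ x y : A, bar (star x y) = star (bar x) (bar y))
    (hbartp : ∀ x y z : A, bar (tp x y z) = tp (bar x) (bar y) (bar z))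
    (D1 : ∀ x y z : A,
      tp x z y - tp y z x = star (star (bar x) (bar y)) (bar z))
    (D2 : ∀ u v x y : A,
      tp u (bar v) (star x y) + star (tp v u x) y + star x (tp v u y) = 0)
    (D3 : ∀ x y z w : A,
      tp x (star y z) w + tp y (star z x) w + tp z (star x y) w = 0)
    (D4 : ∀ x y z w : A,
      tp (star (bar x) (bar y)) z w + tp (star (bar y) (bar z)) x w
        + tp (star (bar z) (bar x)) y w = 0)
    (D5 : ∀ u v x y z : A,
      tp u v (tp x y z)
        = tp (tp u v x) y z - tp x (tp v (bar u) y) z + tp x y (tp u v z))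
    (e : A) (he : bar e = e)
    (heea : ∀ a : A, bar a = a → tp e e a = (-2 : F) • a)
    (heex : ∀ x : A, bar x = -x → tp e e x = x)
    (hxee : ∀ x : A, bar x = -x → tp x e e = 0) :
    (∀ x : A, bar x = -x → tp e x e = 0)
    ∧ (∀ a x w : A, bar a = a → bar x = -x → tp a x w = 0 ∧ tp x a w = 0) := by
  have h6 : (6 : F) ≠ 0 := by
    have h62 : (6 : F) = 2 * 3 := by norm_num
    rw [h62]; exact mul_ne_zero h2 h3
  have heee : tp e e e = (-2 : F) • e := heea e he
  -- K1 : tp A₀ A₁ A₀ = 0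
  have K1 : ∀ a x b : A, bar a = a → bar x = -x → bar b = b → tp a x b = 0 := by
    intro a x b ha hx hb
    have hodd : bar (tp a x b) = -(tp a x b) := by
      rw [hbartp, ha, hx, hb]; simp
    have h5 := D5 e e a x b
    rw [he, heea a ha, heex x hx, heea b hb, heex _ hodd] at h5
    have e1 : (6 : F) • tp a x b
        = tp a x b - (tp ((-2:F) • a) x b - tp a x b + tp a x ((-2:F) • b)) := by
      simp only [map_smul, LinearMap.smul_apply]
      module
    have h5' : (6 : F) • tp a x b = 0 := by rw [e1, ← h5]; exact sub_self _
    rcases smul_eq_zero.mp h5' with h | h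
    · exact absurd h h6
    · exact h
  -- K2 : tp A₁ A₀ A₁ = 0
  have K2 : ∀ x a z : A, bar x = -x → bar a = a → bar z = -z → tp x a z = 0 := by
    intro x a z hx ha hz
    have heven : bar (tp x a z) = tp x a z := by
      rw [hbartp, ha, hx, hz]; simp
    have h5 := D5 e e x a z
    rw [he, heex x hx, heea a ha, heex z hz, heea _ heven] at h5
    have e1 : (6 : F) • tp x a z
        = (tp x a z - tp x ((-2:F) • a) z + tp x a z) - (-2:F) • tp x a z := by
      simp only [map_smul, LinearMap.smul_apply]
      module
    have h5' : (6 : F) • tp x a z = 0 := by rw [e1, ← h5]; exact sub_self _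
    rcases smul_eq_zero.mp h5' with h | h
    · exact absurd h h6
    · exact h
  -- K3 : tp x a e = 0 for x odd, a even
  have K3 : ∀ x a : A, bar x = -x → bar a = a → tp x a e = 0 := by
    intro x a hx ha
    have hso : bar (tp x a e) = -(tp x a e) := by
      rw [hbartp, hx, ha, he]; simp
    have h5 := D5 x a e e e
    rw [heee, hx, hxee _ hso, heex _ hso] at h5
    simp only [map_neg, LinearMap.neg_apply, K1 a x e ha hx he, neg_zero,
      map_zero, LinearMap.zero_apply, zero_sub, neg_zero, zero_add,
      map_smul] at h5
    -- h5 : (-2:F) • tp x a e = tp x a e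
    have e1 : (3 : F) • tp x a e = tp x a e - (-2:F) • tp x a e := by module
    have h5' : (3 : F) • tp x a e = 0 := by rw [e1, h5]; exact sub_self _
    rcases smul_eq_zero.mp h5' with h | h
    · exact absurd h h3
    · exact h
  -- K4 : tp A₁ A₀ A₀ = 0
  have K4 : ∀ x a b : A, bar x = -x → bar a = a → bar b = b → tp x a b = 0 := by
    intro x a b hx ha hb
    have hodd : bar (tp x a b) = -(tp x a b) := by
      rw [hbartp, hx, ha, hb]; simp
    have h5 := D5 x a e e b
    rw [heea b hb, hx, K3 x a hx ha, heex _ hodd] at h5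
    simp only [map_neg, LinearMap.neg_apply, K1 a x e ha hx he, neg_zero,
      map_zero, LinearMap.zero_apply, zero_sub, zero_add, map_smul] at h5
    -- h5 : (-2:F) • tp x a b = tp x a b
    have e1 : (3 : F) • tp x a b = tp x a b - (-2:F) • tp x a b := by module
    have h5' : (3 : F) • tp x a b = 0 := by rw [e1, h5]; exact sub_self _
    rcases smul_eq_zero.mp h5' with h | h
    · exact absurd h h3
    · exact h
  -- K5 : tp A₀ A₁ A₁ = 0
  have K5 : ∀ a x z : A, bar a = a → bar x = -x → bar z = -z → tp a x z = 0 := by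
    intro a x z ha hx hz
    have heven : bar (tp a x z) = tp a x z := by
      rw [hbartp, ha, hx, hz]; simp
    have h5 := D5 a x e e z
    rw [heex z hz, ha, K1 a x e ha hx he, K3 x a hx ha, heea _ heven] at h5
    simp only [map_zero, LinearMap.zero_apply, zero_sub, neg_zero, zero_add,
      map_smul] at h5
    -- h5 : tp a x z = (-2:F) • tp a x z
    have e1 : (3 : F) • tp a x z = tp a x z - (-2:F) • tp a x z := by module
    have h5' : (3 : F) • tp a x z = 0 := by
      rw [e1, ← h5]; exact sub_self _
    rcases smul_eq_zero.mp h5' with h | h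
    · exact absurd h h3
    · exact h
  constructor
  · intro x hx
    exact K1 e x e he hx he
  · intro a x w ha hx
    set w0 : A := (2⁻¹ : F) • (w + bar w) with hw0def
    set w1 : A := (2⁻¹ : F) • (w - bar w) with hw1def
    have hw0 : bar w0 = w0 := by
      rw [hw0def, map_smul, map_add, hinv, add_comm]
    have hw1 : bar w1 = -w1 := by
      rw [hw1def, map_smul, map_sub, hinv, ← smul_neg, neg_sub]
    have hw : w0 + w1 = w := by
      rw [hw0def, hw1def, ← smul_add]
      have : w + bar w + (w - bar w) = (2 : F) • w := by
        rw [two_smul]; abel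
      rw [this, smul_smul, inv_mul_cancel₀ h2, one_smul]
    constructor
    · rw [← hw, map_add, K1 a x w0 ha hx hw0, K5 a x w1 ha hx hw1, add_zero]
    · rw [← hw, map_add, K4 x a w0 hx ha hw0, K2 x a w1 hx ha hw1, add_zero]
end

section
/- Let U be an (ε,δ) Freudenthal-Kantor triple system. Then for any a,b,c,d ∈ U: ε·K(a,b)K(c,d) + L(K(a,b)c, d) − δ·L(K(a,b)d, c) = 0. -/
theorem FKTS_KK_identity_left
    (F : Type*) [Field F] (h2 : (2 : F) ≠ 0) (h3 : (3 : F) ≠ 0)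
    (U : Type*) [AddCommGroup U] [Module F U]
    (t : U →ₗ[F] U →ₗ[F] U →ₗ[F] U)
    (ε δ : F) (hε : ε = 1 ∨ ε = -1) (hδ : δ = 1 ∨ δ = -1)
    (hFK1 : ∀ u v x y : U,
      t u v ∘ₗ t x y - t x y ∘ₗ t u v = t (t u v x) y + ε • t x (t v u y))
    (hFK2 : ∀ u v x y : U,
      Kmap t δ (Kmap t δ u v x) y
        = t y x ∘ₗ Kmap t δ u v - ε • (Kmap t δ u v ∘ₗ t x y))
    (a b c d : U) :
    ε • (Kmap t δ a b ∘ₗ Kmap t δ c d) + t (Kmap t δ a b c) d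
      - δ • t (Kmap t δ a b d) c = 0 := by
  rcases hδ with rfl | rfl <;>
  · ext z
    have E1 := congrFun (congrArg DFunLike.coe (hFK2 a b c z)) d
    have E2 := congrFun (congrArg DFunLike.coe (hFK2 a b d z)) c
    simp only [Kmap, LinearMap.sub_apply, LinearMap.smul_apply, LinearMap.flip_apply,
      LinearMap.comp_apply, LinearMap.add_apply, LinearMap.zero_apply, map_sub, map_smul,
      LinearMap.map_smul₂, LinearMap.map_sub₂, map_add, LinearMap.map_add₂, one_smul, neg_smul, neg_sub, sub_neg_eq_add,
      LinearMap.neg_apply, map_neg] at E1 E2 ⊢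
    first
    | linear_combination (norm := module) E1 - E2
    | linear_combination (norm := module) E1 + E2
end

section
/- Let U be an (ε,δ) Freudenthal-Kantor triple system. Then for any a,b,c,d ∈ U: K(c,d)K(a,b) + δ·L(c, K(a,b)d) − L(d, K(a,b)c) = 0. -/
theorem FKTS_KK_identity_right
    (F : Type*) [Field F] (h2 : (2 : F) ≠ 0) (h3 : (3 : F) ≠ 0)
    (U : Type*) [AddCommGroup U] [Module F U]
    (t : U →ₗ[F] U →ₗ[F] U →ₗ[F] U)
    (ε δ : F) (hε : ε = 1 ∨ ε = -1) (hδ : δ = 1 ∨ δ = -1)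
    (hFK1 : ∀ u v x y : U,
      t u v ∘ₗ t x y - t x y ∘ₗ t u v = t (t u v x) y + ε • t x (t v u y))
    (hFK2 : ∀ u v x y : U,
      Kmap t δ (Kmap t δ u v x) y
        = t y x ∘ₗ Kmap t δ u v - ε • (Kmap t δ u v ∘ₗ t x y))
    (a b c d : U) :
    Kmap t δ c d ∘ₗ Kmap t δ a b + δ • t c (Kmap t δ a b d)
      - t d (Kmap t δ a b c) = 0 := by
  have h1 : ∀ u v x y z : U,
      t u v (t x y z) - t x y (t u v z) = t (t u v x) y z + ε • t x (t v u y) z := by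
    intro u v x y z
    have H := LinearMap.congr_fun (hFK1 u v x y) z
    simp only [LinearMap.sub_apply, LinearMap.add_apply, LinearMap.smul_apply,
      LinearMap.coe_comp, Function.comp_apply] at H
    linear_combination (norm := module) H
  have hK : ∀ u v x y z : U,
      t (t u x v) z y - δ • t (t v x u) z y - δ • t y z (t u x v)
          + (δ * δ) • t y z (t v x u)
        = t y x (t u z v) - δ • t y x (t v z u) - ε • t u (t x y z) v
          + (ε * δ) • t v (t x y z) u := by
    intro u v x y z
    have H := LinearMap.congr_fun (hFK2 u v x y) z
    simp only [Kmap, LinearMap.sub_apply, LinearMap.smul_apply, LinearMap.flip_apply,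
      LinearMap.coe_comp, Function.comp_apply, map_sub, map_smul] at H ⊢
    linear_combination (norm := module) H
  ext e
  simp only [Kmap, LinearMap.sub_apply, LinearMap.add_apply, LinearMap.smul_apply,
    LinearMap.flip_apply, LinearMap.coe_comp, Function.comp_apply, map_sub, map_smul,
    LinearMap.zero_apply]
  rcases hε with hε | hε <;> rcases hδ with hδ | hδ <;> subst hε hδ
  · linear_combination (norm := module)
      h1 c a d b e - h1 c b d a e - h1 d a c b e + h1 d b c a e
        + hK c d a e b - hK c d b e a
  · linear_combination (norm := module)
      h1 c a d b e + h1 c b d a e + h1 d a c b e + h1 d b c a e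
        + hK c d a e b + hK c d b e a
  · linear_combination (norm := module)
      -h1 c a d b e + h1 c b d a e + h1 d a c b e - h1 d b c a e
        - hK c d a e b + hK c d b e a
  · linear_combination (norm := module)
      -h1 c a d b e - h1 c b d a e - h1 d a c b e - h1 d b c a e
        - hK c d a e b - hK c d b e a
end
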